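/- Let ℓ be an odd prime, λ ∈ ℤ_ℓ with λ ≡ 1 (mod ℓ) and λ ≠ 1, and set α = v_ℓ(λ − 1) ≥ 1. Fix k ≥ 1. For each integer 0 ≤ i ≤ k − 1, the set of elements x ∈ ℤ/ℓ^kℤ of additive order exactly ℓ^{i+1} is stable under multiplication by λ; every orbit of the cyclic group generated by multiplication by λ contained in this set has cardinality ℓ^{max(0, i − α + 1)}, and the number of such orbits is (ℓ−1)·ℓ^{min(i, α−1)}. -/

import Mathlib

/-!
Multiplication by `λ` is an additive automorphism of `ℤ/ℓ^k`, so it preserves additive orders.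
For `x` of order `ℓ^(i+1)` we have `λ^m x = x` iff `ℓ^(i+1) ∣ λ^m - 1`, and lifting the exponent
(`ℓ` odd) gives `v_ℓ(λ^m - 1) = α + v_ℓ(m)`; hence every orbit in the set has exactly
`ℓ^(i+1-α)` elements. The set itself has `φ(ℓ^(i+1)) = ℓ^i (ℓ-1)` elements, and dividing
counts the orbits.
-/

open MulAction

theorem Nat.pow_dvd_pow_mul_iff {p a b m : ℕ} (hp : p ≠ 0) :
    p ^ a ∣ p ^ b * m ↔ p ^ (a - b) ∣ m := by
  rcases le_total a b with hab | hba
  · simp [Nat.sub_eq_zero_of_le hab, (pow_dvd_pow p hab).mul_right m]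
  · rw [← Nat.add_sub_cancel' hba, pow_add, Nat.add_sub_cancel_left,
      Nat.mul_dvd_mul_iff_left (pow_pos (Nat.pos_of_ne_zero hp) b)]

theorem addOrderOf_smul {G M : Type*} [Group G] [AddMonoid M] [DistribMulAction G M]
    (g : G) (x : M) : addOrderOf (g • x) = addOrderOf x :=
  (DistribMulAction.toAddEquiv M g).addOrderOf_eq x

theorem ZMod.mul_eq_zero_iff_addOrderOf_dvd_val {n : ℕ} [NeZero n] (w x : ZMod n) :
    w * x = 0 ↔ addOrderOf x ∣ w.val := by
  rw [addOrderOf_dvd_iff_nsmul_eq_zero, nsmul_eq_mul, ZMod.natCast_zmod_val]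

theorem Equiv.Perm.zpow_apply_eq_zpow_smul {G A : Type*} [Group G] [MulAction G A]
    (g : G) {σ : Equiv.Perm A} (hσ : ∀ x, σ x = g • x) (z : ℤ) (x : A) :
    (σ ^ z) x = g ^ z • x := by
  rw [show σ = toPermHom G A g from Equiv.ext hσ, ← map_zpow]
  rfl

theorem MulAction.card_orbits_meeting_mul {G X : Type*} [Group G] [MulAction G X] [Finite X]
    {S : Set X} (hS : ∀ g : G, ∀ x ∈ S, g • x ∈ S) {N : ℕ}
    (hN : ∀ x ∈ S, Nat.card (orbit G x) = N) :
    Nat.card {ω : orbitRel.Quotient G X // ∃ x ∈ S, Quotient.mk (orbitRel G X) x = ω} * N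
      = Nat.card S := by
  set T := {ω : orbitRel.Quotient G X // ∃ x ∈ S, Quotient.mk (orbitRel G X) x = ω}
  have := Fintype.ofFinite T
  let f : S → T := fun x => ⟨Quotient.mk _ x, x, x.2, rfl⟩
  have hfiber (ω : T) : Nat.card {x : S // f x = ω} = N := by
    obtain ⟨_, x₀, hx₀, rfl⟩ := ω
    rw [← hN x₀ hx₀, ← orbitRel.Quotient.orbit_mk]
    refine Nat.card_congr
      { toFun := fun x => ⟨x.1, orbitRel.Quotient.mem_orbit.mpr (congrArg Subtype.val x.2)⟩
        invFun := fun y => ⟨⟨y, ?_⟩, Subtype.ext (orbitRel.Quotient.mem_orbit.mp y.2)⟩ }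
    obtain ⟨g, hg⟩ := y.2
    exact hg ▸ hS g x₀ hx₀
  rw [← Nat.card_congr (Equiv.sigmaFiberEquiv f), Nat.card_sigma, Finset.sum_congr rfl
    fun ω _ => hfiber ω, Finset.sum_const, Finset.card_univ, smul_eq_mul, Nat.card_eq_fintype_card]

namespace PadicInt

variable {p : ℕ} [Fact p.Prime]

theorem pow_p_dvd_nat_iff (n j : ℕ) : (p : ℤ_[p]) ^ j ∣ n ↔ p ^ j ∣ n := by
  simpa [← Int.natCast_dvd_natCast] using pow_p_dvd_int_iff (p := p) j n

theorem emultiplicity_pow_sub_pow (hp : Odd p) {x y : ℤ_[p]} (hxy : (p : ℤ_[p]) ∣ x - y)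
    (hx : ¬(p : ℤ_[p]) ∣ x) (n : ℕ) :
    emultiplicity (p : ℤ_[p]) (x ^ n - y ^ n) = emultiplicity (p : ℤ_[p]) ((x - y) * n) := by
  rcases eq_or_ne n 0 with rfl | hn
  · simp
  obtain ⟨a, t, ht, rfl⟩ := Nat.exists_eq_pow_mul_and_not_dvd hn p (Fact.out : p.Prime).ne_one
  have ht' : ¬(p : ℤ_[p]) ∣ t := by simpa using (pow_p_dvd_nat_iff t 1).not.mpr (by simpa)
  rw [pow_mul, pow_mul, emultiplicity_pow_sub_pow_of_prime prime_p _ _ ht',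
    emultiplicity_pow_prime_pow_sub_pow_prime_pow prime_p hp hxy hx, Nat.cast_mul, ← mul_assoc,
    emultiplicity_mul prime_p, emultiplicity_mul prime_p, Nat.cast_pow,
    emultiplicity_pow_self_of_prime prime_p, emultiplicity_eq_zero.mpr ht', add_zero]
  · exact hxy.trans (sub_dvd_pow_sub_pow x y _)
  · exact fun h => hx (prime_p.dvd_of_dvd_pow h)

theorem isUnit_iff_not_p_dvd {x : ℤ_[p]} : IsUnit x ↔ ¬(p : ℤ_[p]) ∣ x := by
  rw [← not_iff_not, not_not, not_isUnit_iff, norm_lt_one_iff_dvd]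

theorem not_p_dvd_of_p_dvd_sub_one {x : ℤ_[p]} (hx : (p : ℤ_[p]) ∣ x - 1) : ¬(p : ℤ_[p]) ∣ x :=
  fun h => prime_p.not_dvd_one (by simpa using dvd_sub h hx)

theorem pow_p_dvd_pow_sub_one_iff (hp : Odd p) {x : ℤ_[p]} (hx : (p : ℤ_[p]) ∣ x - 1)
    (hx1 : x ≠ 1) (j n : ℕ) :
    (p : ℤ_[p]) ^ j ∣ x ^ n - 1 ↔ p ^ j ∣ p ^ (x - 1).valuation * n := by
  have hLTE := emultiplicity_pow_sub_pow hp hx (not_p_dvd_of_p_dvd_sub_one hx) n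
  rw [one_pow, emultiplicity_eq_emultiplicity_iff] at hLTE
  rw [hLTE]
  nth_rw 1 [unitCoeff_spec (sub_ne_zero.mpr hx1)]
  rw [mul_assoc, Units.dvd_mul_left, ← pow_p_dvd_nat_iff, Nat.cast_mul, Nat.cast_pow]

theorem pow_p_dvd_toZModPow_val_iff {j k : ℕ} (hjk : j ≤ k) (z : ℤ_[p]) :
    p ^ j ∣ (toZModPow k z).val ↔ (p : ℤ_[p]) ^ j ∣ z := by
  rw [← ZMod.natCast_eq_zero_iff, ZMod.natCast_val, cast_toZModPow j k hjk, ← RingHom.mem_ker,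
    ker_toZModPow, Ideal.mem_span_singleton]

theorem toZModPow_mul_eq_self_iff {j k : ℕ} (hjk : j ≤ k) (z : ℤ_[p]) {x : ZMod (p ^ k)}
    (hx : addOrderOf x = p ^ j) : toZModPow k z * x = x ↔ (p : ℤ_[p]) ^ j ∣ z - 1 := by
  rw [← sub_eq_zero, ← sub_one_mul, ZMod.mul_eq_zero_iff_addOrderOf_dvd_val, hx, ← map_one
    (toZModPow k), ← map_sub, pow_p_dvd_toZModPow_val_iff hjk]

theorem minimalPeriod_toZModPow_mul (hp : Odd p) {x : ℤ_[p]} (hx : (p : ℤ_[p]) ∣ x - 1)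
    (hx1 : x ≠ 1) {j k : ℕ} (hjk : j ≤ k) {y : ZMod (p ^ k)} (hy : addOrderOf y = p ^ j) :
    Function.minimalPeriod (toZModPow k x * ·) y = p ^ (j - (x - 1).valuation) := by
  refine Nat.dvd_right_iff_eq.mp fun m => ?_
  rw [← Function.isPeriodicPt_iff_minimalPeriod_dvd, Function.IsPeriodicPt, Function.IsFixedPt,
    mul_left_iterate_apply, ← map_pow, toZModPow_mul_eq_self_iff hjk _ hy,
    pow_p_dvd_pow_sub_one_iff hp hx hx1, Nat.pow_dvd_pow_mul_iff (Fact.out : p.Prime).ne_zero]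

end PadicInt

open PadicInt

/-- Let `ℓ` be an odd prime, `λ ∈ ℤ_ℓ` with `λ ≡ 1 (mod ℓ)`, `λ ≠ 1`,
`α = v_ℓ(λ-1) ≥ 1`.  Fix `k ≥ 1`.  For `0 ≤ i ≤ k-1`, the set of elements of `ℤ/ℓ^kℤ` of
additive order exactly `ℓ^(i+1)` is stable under multiplication by `λ`; each orbit of the
cyclic group generated by multiplication by `λ` inside this set has cardinality
`ℓ^max(0, i-α+1)`, and the number of such orbits is `(ℓ-1)·ℓ^min(i, α-1)`. -/
theorem stmt11 (ℓ : ℕ) [Fact (Nat.Prime ℓ)] (hodd : ℓ ≠ 2)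
    (lam : ℤ_[ℓ]) (hlam : (ℓ : ℤ_[ℓ]) ∣ (lam - 1)) (hne : lam ≠ 1)
    (α : ℕ) (hα : α = (lam - 1).valuation)
    (k : ℕ) (hk : 1 ≤ k)
    (σ : Equiv.Perm (ZMod (ℓ ^ k)))
    (hσ : ∀ x : ZMod (ℓ ^ k), σ x = PadicInt.toZModPow k lam * x)
    (i : ℕ) (hi : i ≤ k - 1)
    (S : Set (ZMod (ℓ ^ k))) (hS : S = {x | addOrderOf x = ℓ ^ (i + 1)}) :
    (∀ x ∈ S, σ x ∈ S)
    ∧ (∀ x ∈ S, Nat.card (MulAction.orbit (Subgroup.zpowers σ) x)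
        = ℓ ^ (max 0 ((i + 1) - α)))
    ∧ Nat.card {ω : MulAction.orbitRel.Quotient (Subgroup.zpowers σ) (ZMod (ℓ ^ k)) //
        ∃ x ∈ S, Quotient.mk (MulAction.orbitRel (Subgroup.zpowers σ) _) x = ω}
        = (ℓ - 1) * ℓ ^ (min i (α - 1)) := by
  have hp : ℓ.Prime := Fact.out
  have hα1 : 1 ≤ α := by
    rwa [hα, ← mem_span_pow_iff_le_valuation _ (sub_ne_zero.mpr hne), pow_one,
      Ideal.mem_span_singleton]
  have hik : i + 1 ≤ k := by omega
  obtain ⟨u, hu⟩ := (isUnit_iff_not_p_dvd.mpr (not_p_dvd_of_p_dvd_sub_one hlam)).map (toZModPow k)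
  have hσu (x : ZMod (ℓ ^ k)) : σ x = u • x := by rw [hσ, Units.smul_def, smul_eq_mul, hu]
  have hS_inv : ∀ g : Subgroup.zpowers σ, ∀ x ∈ S, g • x ∈ S := by
    rintro ⟨g, hg⟩ x hx
    obtain ⟨z, rfl⟩ := Subgroup.mem_zpowers_iff.mp hg
    rw [hS] at hx ⊢
    rwa [Set.mem_ofPred_eq, Subgroup.mk_smul, Equiv.Perm.smul_def,
      Equiv.Perm.zpow_apply_eq_zpow_smul u hσu, addOrderOf_smul]
  have horbit : ∀ x ∈ S, Nat.card (orbit (Subgroup.zpowers σ) x) = ℓ ^ (i + 1 - α) := by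
    intro x hx
    rw [hS] at hx
    have hσ_mul : (σ • ·) = (toZModPow k lam * ·) := funext hσ
    rw [Nat.card_congr (orbitZPowersEquiv σ x), Nat.card_zmod, hσ_mul,
      minimalPeriod_toZModPow_mul (hp.odd_of_ne_two hodd) hlam hne hik hx, hα]
  have hcardS : Nat.card S = ℓ ^ i * (ℓ - 1) := by
    rw [hS, Nat.card_eq_fintype_card, Fintype.card_subtype, ← Nat.totient_prime_pow_succ hp]
    exact IsAddCyclic.card_addOrderOf_eq_totient (by rw [ZMod.card]; exact pow_dvd_pow ℓ hik)
  refine ⟨fun x hx => hS_inv ⟨σ, Subgroup.mem_zpowers σ⟩ x hx,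
    fun x hx => by rw [horbit x hx, Nat.zero_max], ?_⟩
  have hcount := card_orbits_meeting_mul hS_inv horbit
  rw [hcardS] at hcount
  refine Nat.eq_of_mul_eq_mul_right (pow_pos hp.pos (i + 1 - α)) (hcount.trans ?_)
  rw [mul_comm, mul_assoc, ← pow_add]
  congr
  omega
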